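/- Let g: ℝ^p → (−∞, ∞] be a proper lower semicontinuous convex function that is block separable over a partition ℬ of the coordinates, i.e., g(x) = ∑_{B∈ℬ} g_B([x]_B). Let x, x̃ ∈ ℝ^p, γ > 0, and set z = prox_{γg}(x), z̃ = prox_{γg}(x̃). Then for any subset 𝒜 ⊆ ℬ of blocks, ⟨[z − z̃]_𝒜, [x − x̃]_𝒜⟩ ≥ ‖[z − z̃]_𝒜‖², where [v]_𝒜 denotes the restriction of v to the coordinates in the blocks of 𝒜. -/

import Mathlib

open Finset
open scoped RealInnerProductSpace

noncomputable section

variable {p : ℕ}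

/-- proper, lower semicontinuous, convex extended-real function. -/
structure ProperLscConvex (g : EuclideanSpace ℝ (Fin p) → EReal) : Prop where
  proper : ∃ x, g x ≠ ⊤
  ne_bot : ∀ x, g x ≠ ⊥
  lsc : LowerSemicontinuous g
  convex : ∀ x y : EuclideanSpace ℝ (Fin p), ∀ a b : ℝ, 0 ≤ a → 0 ≤ b → a + b = 1 →
    g (a • x + b • y) ≤ (a : EReal) * g x + (b : EReal) * g y

/-- `z = prox_{γ g}(x)`: `z` minimizes `w ↦ g(w) + (1/(2γ)) ‖x − w‖²`. -/
def IsProx (γ : ℝ) (g : EuclideanSpace ℝ (Fin p) → EReal) (x z : EuclideanSpace ℝ (Fin p)) : Prop :=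
  ∀ w, g z + (((1 / (2 * γ)) * ‖x - z‖ ^ 2 : ℝ) : EReal)
      ≤ g w + (((1 / (2 * γ)) * ‖x - w‖ ^ 2 : ℝ) : EReal)

/-!
Swapping the `A`-blocks of `z` and `z̃` gives two points `w`, `w̃` with `g w + g w̃ = g z + g z̃`,
by block separability. Adding the prox optimality conditions `⟪x - z, w - z⟫ ≤ γ (g w - g z)`
and `⟪x̃ - z̃, w̃ - z̃⟫ ≤ γ (g w̃ - g z̃)`, whose left-hand sides only involve the coordinates in `A`,
gives `⟪[z - z̃]_A, [(x - z) - (x̃ - z̃)]_A⟫ ≥ 0`.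
-/

open Filter Topology

def EConvex {E : Type*} [AddCommGroup E] [Module ℝ E] (g : E → EReal) : Prop :=
  ∀ x y : E, ∀ a b : ℝ, 0 ≤ a → 0 ≤ b → a + b = 1 →
    g (a • x + b • y) ≤ (a : EReal) * g x + (b : EReal) * g y

lemma EReal.exists_coe_of_add_eq_coe {a b : EReal} {c : ℝ} (h : a + b = c) (ha : a ≠ ⊥)
    (hb : b ≠ ⊥) : ∃ s t : ℝ, a = s ∧ b = t ∧ s + t = c := by
  have ha' : a ≠ ⊤ := by
    rintro rfl
    exact EReal.coe_ne_top c (h ▸ EReal.top_add_of_ne_bot hb)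
  have hb' : b ≠ ⊤ := by
    rintro rfl
    exact EReal.coe_ne_top c (h ▸ EReal.add_top_of_ne_bot ha)
  lift a to ℝ using ⟨ha', ha⟩
  lift b to ℝ using ⟨hb', hb⟩
  exact ⟨a, b, rfl, rfl, by exact_mod_cast h⟩

namespace IsProx

variable {γ : ℝ} {g : EuclideanSpace ℝ (Fin p) → EReal} {x z : EuclideanSpace ℝ (Fin p)}

lemma ne_top (hz : IsProx γ g x z) (hproper : ∃ w, g w ≠ ⊤) : g z ≠ ⊤ := by
  obtain ⟨w, hw⟩ := hproper
  intro htop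
  have hmin := hz w
  rw [htop, EReal.top_add_coe, top_le_iff] at hmin
  exact EReal.add_lt_top hw (EReal.coe_ne_top _) |>.ne hmin

lemma inner_sub_le (hγ : 0 < γ) (hconv : EConvex g) (hz : IsProx γ g x z)
    {w : EuclideanSpace ℝ (Fin p)} {r s : ℝ} (hr : g z = r) (hs : g w = s) :
    ⟪x - z, w - z⟫ ≤ γ * (s - r) := by
  set c : ℝ := 1 / (2 * γ)
  have hc : 0 < c := by positivity
  -- Test the prox against the points `(1 - t) • z + t • w` of the segment and let `t → 0`.
  have key : ∀ t ∈ Set.Ioo (0 : ℝ) 1,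
      2 * c * ⟪x - z, w - z⟫ - (s - r) ≤ t * (c * ‖w - z‖ ^ 2) := by
    rintro t ⟨ht0, ht1⟩
    have hseg : x - ((1 - t) • z + t • w) = (x - z) - t • (w - z) := by module
    have hmin := (hz ((1 - t) • z + t • w)).trans
      (add_le_add (hconv z w (1 - t) t (by linarith) ht0.le (by ring)) le_rfl)
    rw [hr, hs, hseg, norm_sub_sq_real (x - z), inner_smul_right, norm_smul,
      Real.norm_of_nonneg ht0.le] at hmin
    have hmin' : r + c * ‖x - z‖ ^ 2 ≤ (1 - t) * r + t * s
        + c * (‖x - z‖ ^ 2 - 2 * (t * ⟪x - z, w - z⟫) + (t * ‖w - z‖) ^ 2) := by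
      exact_mod_cast hmin
    nlinarith
  have hlim : Tendsto (fun t : ℝ => t * (c * ‖w - z‖ ^ 2)) (𝓝[>] 0) (𝓝 0) :=
    ((continuous_mul_const _).tendsto' 0 0 (zero_mul _)).mono_left nhdsWithin_le_nhds
  have hle := ge_of_tendsto hlim (eventually_of_mem (Ioo_mem_nhdsGT one_pos) key)
  have hγc : γ * (2 * c) = 1 := by simp only [c]; field_simp
  calc ⟪x - z, w - z⟫ = γ * (2 * c * ⟪x - z, w - z⟫ - (s - r)) + γ * (s - r) := by
        linear_combination (-⟪x - z, w - z⟫) * hγc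
    _ ≤ γ * (s - r) := by linarith [mul_nonpos_of_nonneg_of_nonpos hγ.le hle]

end IsProx

section BlockSplice

variable {ι Bk : Type*} [DecidableEq Bk] (blk : ι → Bk) (A : Finset Bk)

def blockSplice (u v : EuclideanSpace ℝ ι) : EuclideanSpace ℝ ι :=
  WithLp.toLp 2 fun j => if blk j ∈ A then v j else u j

variable {blk A}

lemma apply_blockSplice {M : Type*} {f : EuclideanSpace ℝ ι → M} {b : Bk}
    (hf : ∀ x y, (∀ j, blk j = b → x j = y j) → f x = f y) (u v : EuclideanSpace ℝ ι) :
    f (blockSplice blk A u v) = if b ∈ A then f v else f u := by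
  split_ifs with hb <;> exact hf _ _ fun j hj => by simp [blockSplice, hj, hb]

lemma sum_blockSplice_add_sum_blockSplice {M : Type*} [AddCommMonoid M] [Fintype Bk]
    {gB : Bk → EuclideanSpace ℝ ι → M}
    (hgB : ∀ b x y, (∀ j, blk j = b → x j = y j) → gB b x = gB b y) (u v : EuclideanSpace ℝ ι) :
    ∑ b, gB b (blockSplice blk A u v) + ∑ b, gB b (blockSplice blk A v u)
      = ∑ b, gB b u + ∑ b, gB b v := by
  simp only [← sum_add_distrib, apply_blockSplice (hgB _)]
  exact sum_congr rfl fun b _ => by split_ifs <;> simp only [add_comm]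

lemma inner_blockSplice_sub [Fintype ι] (a u v : EuclideanSpace ℝ ι) :
    ⟪a, blockSplice blk A u v - u⟫ = ∑ j ∈ univ.filter (fun j => blk j ∈ A), a j * (v j - u j) := by
  rw [PiLp.inner_apply, sum_filter]
  refine sum_congr rfl fun j _ => ?_
  split_ifs with hj <;> simp [blockSplice, hj, mul_comm]

end BlockSplice

/-- block firm nonexpansiveness.  If `g` is proper lsc convex and block
separable over a partition `ℬ` of the coordinates (encoded by a block map `blk : Fin p → Bk`,
with `g = ∑_{b} g_b` where each `g_b` only depends on the coordinates of block `b`), then for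
`z = prox_{γg}(x)`, `z̃ = prox_{γg}(x̃)` and any subset `𝒜` of blocks,
`⟨[z − z̃]_𝒜, [x − x̃]_𝒜⟩ ≥ ‖[z − z̃]_𝒜‖²`. -/
theorem block_firm_nonexpansiveness
    {Bk : Type} [Fintype Bk] [DecidableEq Bk] (blk : Fin p → Bk)
    (g : EuclideanSpace ℝ (Fin p) → EReal) (hg : ProperLscConvex g)
    (gB : Bk → EuclideanSpace ℝ (Fin p) → EReal)
    (hgB_block : ∀ b x y, (∀ j, blk j = b → x j = y j) → gB b x = gB b y)
    (hgsum : ∀ x, g x = ∑ b, gB b x)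
    (γ : ℝ) (hγ : 0 < γ)
    (x xtil z ztil : EuclideanSpace ℝ (Fin p))
    (hz : IsProx γ g x z) (hztil : IsProx γ g xtil ztil)
    (A : Finset Bk) :
    ∑ j ∈ univ.filter (fun j : Fin p => blk j ∈ A), (z j - ztil j) * (x j - xtil j)
      ≥ ∑ j ∈ univ.filter (fun j : Fin p => blk j ∈ A), (z j - ztil j) ^ 2 := by
  obtain ⟨r, hr⟩ : ∃ r : ℝ, g z = r :=
    ⟨_, (EReal.coe_toReal (hz.ne_top hg.proper) (hg.ne_bot z)).symm⟩
  obtain ⟨rt, hrt⟩ : ∃ r : ℝ, g ztil = r :=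
    ⟨_, (EReal.coe_toReal (hztil.ne_top hg.proper) (hg.ne_bot ztil)).symm⟩
  have hexchange : g (blockSplice blk A z ztil) + g (blockSplice blk A ztil z) = (r + rt : ℝ) := by
    rw [hgsum, hgsum, sum_blockSplice_add_sum_blockSplice hgB_block, ← hgsum, ← hgsum, hr, hrt,
      EReal.coe_add]
  obtain ⟨s, st, hs, hst, hsum⟩ :=
    EReal.exists_coe_of_add_eq_coe hexchange (hg.ne_bot _) (hg.ne_bot _)
  have h₁ := hz.inner_sub_le hγ hg.convex hr hs
  have h₂ := hztil.inner_sub_le hγ hg.convex hrt hst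
  have hγsum : γ * (s - r) + γ * (st - rt) = 0 := by
    rw [← mul_add]; exact mul_eq_zero_of_right _ (by linarith)
  have hsum_le := hγsum ▸ add_le_add h₁ h₂
  rw [inner_blockSplice_sub, inner_blockSplice_sub, ← sum_add_distrib] at hsum_le
  rw [ge_iff_le, ← sub_nonneg, ← sum_sub_distrib]
  refine (neg_nonneg.mpr hsum_le).trans_eq ?_
  rw [← sum_neg_distrib]
  exact sum_congr rfl fun j _ => by simp only [PiLp.sub_apply]; ring
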